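/- Let V be a semilinear variety of pointed residuated lattices. Then for any finite set of variables x̄ and any finite set Γ ∪ {s,t} of terms over x̄ in the language of pointed residuated lattices expanded with ▷: Γ ∪ {s} ⊨_{V▷} t if, and only if, Γ ⊨_{V▷} s ▷ t. Consequently, the variety V▷ has equationally definable principal congruences. -/

import Mathlib

namespace Paper

open FirstOrder FirstOrder.Language FirstOrder.Language.Structure

universe u

/-- A bundled algebra: an `L`-structure with carrier in `Type u`. -/
structure Alg (L : FirstOrder.Language.{u, u}) : Type (u + 1) where
  carrier : Type u
  [str : L.Structure carrier]

attribute [instance] Alg.str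

variable {L : FirstOrder.Language.{u, u}}

/-- The direct product of a family of `L`-structures. -/
instance piStructure {ι : Type u} (M : ι → Type u) [∀ i, L.Structure (M i)] :
    L.Structure (∀ i, M i) where
  funMap f x i := funMap f fun j => x j i
  RelMap r x := ∀ i, RelMap r fun j => x j i

/-- An equation `s ≈ t` holds in `M` under the assignment `v`. -/
def EqHolds {α : Type} {M : Type u} [L.Structure M]
    (ε : L.Term α × L.Term α) (v : α → M) : Prop :=
  ε.1.realize v = ε.2.realize v

/-- A (finite) conjunction of equations holds under the assignment `v`. -/
def ConjHolds {α : Type} {M : Type u} [L.Structure M]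
    (c : List (L.Term α × L.Term α)) (v : α → M) : Prop :=
  ∀ ε ∈ c, EqHolds ε v

/-- A (finite) conjunction of negated equations holds under the assignment `v`. -/
def NegConjHolds {α : Type} {M : Type u} [L.Structure M]
    (c : List (L.Term α × L.Term α)) (v : α → M) : Prop :=
  ∀ ε ∈ c, ¬ EqHolds ε v

/-- The first-order theory of a class of algebras. -/
def theoryOf (K : Set (Alg L)) : L.Theory :=
  {φ | ∀ A ∈ K, A.carrier ⊨ φ}

/-- A sentence is universal if it is the universal closure of a quantifier-free formula. -/
def IsUniversalSentence (φ : L.Sentence) : Prop :=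
  ∃ (n : ℕ) (ψ : L.BoundedFormula Empty n), ψ.IsQF ∧ φ = ψ.alls

/-- Semantic entailment of a sentence from a theory. -/
def Entails (T : L.Theory) (φ : L.Sentence) : Prop :=
  ∀ (M : Type u) [L.Structure M] [Nonempty M], M ⊨ T → M ⊨ φ

/-- Two theories are co-theories when they entail the same universal sentences. -/
def AreCotheories (T T' : L.Theory) : Prop :=
  ∀ φ : L.Sentence, IsUniversalSentence φ → (Entails T φ ↔ Entails T' φ)

/-- A theory is model complete when every embedding between its models is elementary. -/
def IsModelComplete (T : L.Theory) : Prop :=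
  ∀ (M N : Type u) [L.Structure M] [L.Structure N] [Nonempty M] [Nonempty N],
    M ⊨ T → N ⊨ T → ∀ (f : M ↪[L] N) (n : ℕ) (φ : L.Formula (Fin n)) (v : Fin n → M),
      φ.Realize (f ∘ v) ↔ φ.Realize v

/-- `T'` is a model companion of `T`. -/
def IsModelCompanion (T T' : L.Theory) : Prop :=
  IsModelComplete T' ∧ AreCotheories T T'

/-- The (quantifier-free) diagram of a structure: all quantifier-free sentences with
parameters from `M` that hold in `M`. -/
def diagram (L : FirstOrder.Language.{u, u}) (M : Type u) [L.Structure M] :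
    (L[[M]]).Theory :=
  {φ | BoundedFormula.IsQF φ ∧ M ⊨ φ}

/-- `T'` is a model completion of `T`: a model companion such that, for every model `M` of `T`,
`T'` together with the diagram of `M` is complete. -/
def IsModelCompletion (T T' : L.Theory) : Prop :=
  IsModelCompanion T T' ∧
    ∀ (M : Type u) [L.Structure M] [Nonempty M], M ⊨ T →
      Theory.IsComplete ((L.lhomWithConstants M).onTheory T' ∪ diagram L M)

/-- The theory of the class `K` has a model completion. -/
def HasModelCompletion (K : Set (Alg L)) : Prop :=
  ∃ T' : L.Theory, IsModelCompletion (theoryOf K) T'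

/-- `K` is a universal class: it is closed under isomorphisms, substructures and ultraproducts. -/
def IsUniversalClass (K : Set (Alg L)) : Prop :=
  (∀ A ∈ K, ∀ (N : Type u) [L.Structure N], Nonempty (A.carrier ≃[L] N) → Alg.mk N ∈ K) ∧
  (∀ A ∈ K, ∀ S : L.Substructure A.carrier, Alg.mk (↥S) ∈ K) ∧
  (∀ (ι : Type u) (F : Ultrafilter ι) (M : ι → Type u) [∀ i, L.Structure (M i)],
      (∀ i, Alg.mk (M i) ∈ K) → Alg.mk ((F : Filter ι).Product M) ∈ K)

/-- `K` is a variety: it is closed under homomorphic images, substructures and products. -/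
def IsVariety (K : Set (Alg L)) : Prop :=
  (∀ A ∈ K, ∀ (N : Type u) [L.Structure N] (f : A.carrier →[L] N),
      Function.Surjective ⇑f → Alg.mk N ∈ K) ∧
  (∀ A ∈ K, ∀ S : L.Substructure A.carrier, Alg.mk (↥S) ∈ K) ∧
  (∀ (ι : Type u) (M : ι → Type u) [∀ i, L.Structure (M i)],
      (∀ i, Alg.mk (M i) ∈ K) → Alg.mk (∀ i, M i) ∈ K)

/-- The amalgamation property. -/
def Amalgamation (K : Set (Alg L)) : Prop :=
  ∀ A ∈ K, ∀ B ∈ K, ∀ C ∈ K,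
    ∀ (f : A.carrier ↪[L] B.carrier) (g : A.carrier ↪[L] C.carrier),
      ∃ D ∈ K, ∃ (h : B.carrier ↪[L] D.carrier) (k : C.carrier ↪[L] D.carrier),
        ∀ a : A.carrier, h (f a) = k (g a)

/-- The variable projection property. -/
def VarProj (K : Set (Alg L)) : Prop :=
  ∀ (n : ℕ) (φ : List (L.Term (Fin n ⊕ Unit) × L.Term (Fin n ⊕ Unit))),
    ∃ ξ : L.Formula (Fin n), ξ.IsQF ∧
      (∀ A ∈ K, ∀ v : Fin n ⊕ Unit → A.carrier, ConjHolds φ v → ξ.Realize (v ∘ Sum.inl)) ∧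
      (∀ ε : L.Term (Fin n) × L.Term (Fin n),
        (∀ A ∈ K, ∀ v : Fin n ⊕ Unit → A.carrier, ConjHolds φ v → EqHolds ε (v ∘ Sum.inl)) →
        (∀ A ∈ K, ∀ v : Fin n → A.carrier, ξ.Realize v → EqHolds ε v))

/-- The equational variable projection property. -/
def EqVarProj (K : Set (Alg L)) : Prop :=
  ∀ (n : ℕ) (φ : List (L.Term (Fin n ⊕ Unit) × L.Term (Fin n ⊕ Unit))),
    ∃ ξ : List (L.Term (Fin n) × L.Term (Fin n)),
      (∀ A ∈ K, ∀ v : Fin n ⊕ Unit → A.carrier, ConjHolds φ v → ConjHolds ξ (v ∘ Sum.inl)) ∧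
      (∀ ε : L.Term (Fin n) × L.Term (Fin n),
        (∀ A ∈ K, ∀ v : Fin n ⊕ Unit → A.carrier, ConjHolds φ v → EqHolds ε (v ∘ Sum.inl)) →
        (∀ A ∈ K, ∀ v : Fin n → A.carrier, ConjHolds ξ v → EqHolds ε v))

/-- The conservative model extension property. -/
def ConsModelExt (K : Set (Alg L)) : Prop :=
  ∀ (n : ℕ) (pos neg : List (L.Term (Fin n ⊕ Unit) × L.Term (Fin n ⊕ Unit))),
    ∃ χ : L.Formula (Fin n), χ.IsQF ∧
      (∀ A ∈ K, ∀ v : Fin n ⊕ Unit → A.carrier,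
        ConjHolds pos v → NegConjHolds neg v → χ.Realize (v ∘ Sum.inl)) ∧
      (∀ A ∈ K, ∀ a : Fin n → A.carrier,
        Substructure.closure L (Set.range a) = ⊤ →
        χ.Realize a →
        (∀ ε : L.Term (Fin n) × L.Term (Fin n),
          (∀ B ∈ K, ∀ v : Fin n ⊕ Unit → B.carrier,
            ConjHolds pos v → EqHolds ε (v ∘ Sum.inl)) →
          EqHolds ε a) →
        ∃ B ∈ K, ∃ (g : A.carrier ↪[L] B.carrier) (b : B.carrier),
          ConjHolds pos (Sum.elim (⇑g ∘ a) fun _ => b) ∧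
          NegConjHolds neg (Sum.elim (⇑g ∘ a) fun _ => b))

/-- The strengthened extension property of Proposition 3.8 (tuples of new variables, and no
conservativity conditions). -/
def StrongModelExt (K : Set (Alg L)) : Prop :=
  ∀ (n m : ℕ) (pos neg : List (L.Term (Fin n ⊕ Fin m) × L.Term (Fin n ⊕ Fin m))),
    ∃ χ : L.Formula (Fin n), χ.IsQF ∧
      (∀ A ∈ K, ∀ v : Fin n ⊕ Fin m → A.carrier,
        ConjHolds pos v → NegConjHolds neg v → χ.Realize (v ∘ Sum.inl)) ∧
      (∀ A ∈ K, ∀ a : Fin n → A.carrier, χ.Realize a →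
        ∃ B ∈ K, ∃ (g : A.carrier ↪[L] B.carrier) (b : Fin m → B.carrier),
          ConjHolds pos (Sum.elim (⇑g ∘ a) b) ∧ NegConjHolds neg (Sum.elim (⇑g ∘ a) b))

/-- The equational variable restriction property. `π` is either `⊥` (encoded by `none`) or a
conjunction of equations. -/
def OptConjHolds {α : Type} {M : Type u} [L.Structure M] :
    Option (List (L.Term α × L.Term α)) → (α → M) → Prop
  | none => fun _ => False
  | some c => fun v => ConjHolds c v

def EqVarRestrict (K : Set (Alg L)) : Prop :=
  ∀ (n : ℕ) (γ : List (L.Term (Fin n ⊕ Unit) × L.Term (Fin n ⊕ Unit))),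
    ∃ π : Option (List (L.Term (Fin n) × L.Term (Fin n))),
      (∀ A ∈ K, ∀ v : Fin n ⊕ Unit → A.carrier, OptConjHolds π (v ∘ Sum.inl) → ConjHolds γ v) ∧
      (∀ φ : List (L.Term (Fin n) × L.Term (Fin n)),
        (∀ A ∈ K, ∀ v : Fin n ⊕ Unit → A.carrier, ConjHolds φ (v ∘ Sum.inl) → ConjHolds γ v) →
        (∀ A ∈ K, ∀ v : Fin n → A.carrier, ConjHolds φ v → OptConjHolds π v))

/-- A locally finite class of algebras. -/
def LocallyFinite (K : Set (Alg L)) : Prop :=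
  ∀ A ∈ K, ∀ S : L.Substructure A.carrier, S.FG → Finite ↥S

/-- A congruence of an `L`-structure. -/
structure Congruence (L : FirstOrder.Language.{u, u}) (M : Type u) [L.Structure M] :
    Type u where
  rel : M → M → Prop
  refl : ∀ a, rel a a
  symm : ∀ a b, rel a b → rel b a
  trans : ∀ a b c, rel a b → rel b c → rel a c
  compat : ∀ (n : ℕ) (f : L.Functions n) (x y : Fin n → M),
    (∀ i, rel (x i) (y i)) → rel (funMap f x) (funMap f y)

/-- The congruence generated by a set of pairs. -/
def congGen (L : FirstOrder.Language.{u, u}) (M : Type u) [L.Structure M]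
    (s : Set (M × M)) : Congruence L M where
  rel a b := ∀ θ : Congruence L M, (∀ p ∈ s, θ.rel p.1 p.2) → θ.rel a b
  refl a θ _ := θ.refl a
  symm a b h θ hs := θ.symm a b (h θ hs)
  trans a b c h₁ h₂ θ hs := θ.trans a b c (h₁ θ hs) (h₂ θ hs)
  compat n f x y h θ hs := θ.compat n f x y fun i => h i θ hs

/-- The principal congruence generated by a pair. -/
def principalCong (L : FirstOrder.Language.{u, u}) (M : Type u) [L.Structure M]
    (b₁ b₂ : M) : Congruence L M :=
  congGen L M {(b₁, b₂)}

/-- A compact (finitely generated) congruence. -/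
def Congruence.IsCompact {M : Type u} [L.Structure M] (θ : Congruence L M) : Prop :=
  ∃ s : Set (M × M), s.Finite ∧ ∀ a b, θ.rel a b ↔ (congGen L M s).rel a b

/-- The meet of two congruences. -/
def infCong {M : Type u} [L.Structure M] (θ₁ θ₂ : Congruence L M) : Congruence L M where
  rel a b := θ₁.rel a b ∧ θ₂.rel a b
  refl a := ⟨θ₁.refl a, θ₂.refl a⟩
  symm a b h := ⟨θ₁.symm a b h.1, θ₂.symm a b h.2⟩
  trans a b c h₁ h₂ := ⟨θ₁.trans a b c h₁.1 h₂.1, θ₂.trans a b c h₁.2 h₂.2⟩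
  compat n f x y h :=
    ⟨θ₁.compat n f x y fun i => (h i).1, θ₂.compat n f x y fun i => (h i).2⟩

/-- The join of two congruences. -/
def supCong {M : Type u} [L.Structure M] (θ₁ θ₂ : Congruence L M) : Congruence L M :=
  congGen L M {p : M × M | θ₁.rel p.1 p.2 ∨ θ₂.rel p.1 p.2}

/-- The compact intersection property. -/
def HasCIP (K : Set (Alg L)) : Prop :=
  ∀ A ∈ K, ∀ θ₁ θ₂ : Congruence L A.carrier,
    θ₁.IsCompact → θ₂.IsCompact → (infCong θ₁ θ₂).IsCompact

/-- Congruence distributivity of a class. -/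
def CongDistributive (K : Set (Alg L)) : Prop :=
  ∀ A ∈ K, ∀ θ₁ θ₂ θ₃ : Congruence L A.carrier, ∀ a b : A.carrier,
    (infCong θ₁ (supCong θ₂ θ₃)).rel a b ↔ (supCong (infCong θ₁ θ₂) (infCong θ₁ θ₃)).rel a b

/-- The congruence extension property. -/
def CongExtension (K : Set (Alg L)) : Prop :=
  ∀ A ∈ K, ∀ (S : L.Substructure A.carrier) (θ : Congruence L ↥S),
    ∃ θ' : Congruence L A.carrier, ∀ a b : ↥S, θ'.rel ↑a ↑b ↔ θ.rel a b

/-- Equationally definable principal congruences. -/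
def EDPC (K : Set (Alg L)) : Prop :=
  ∃ φ : List (L.Term (Fin 4) × L.Term (Fin 4)),
    ∀ A ∈ K, ∀ a₁ a₂ b₁ b₂ : A.carrier,
      (principalCong L A.carrier b₁ b₂).rel a₁ a₂ ↔ ConjHolds φ ![a₁, a₂, b₁, b₂]

/-- Quantifier-free definable principal congruences. -/
def QFDPC (K : Set (Alg L)) : Prop :=
  ∃ α : L.Formula (Fin 4), α.IsQF ∧
    ∀ A ∈ K, ∀ a₁ a₂ b₁ b₂ : A.carrier,
      (principalCong L A.carrier b₁ b₂).rel a₁ a₂ ↔ α.Realize ![a₁, a₂, b₁, b₂]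

/-- Parametrically definable principal congruences. -/
def PDPC (K : Set (Alg L)) : Prop :=
  ∃ (m : ℕ) (ξ : L.Formula (Fin 4 ⊕ Fin m)), ξ.IsQF ∧
    ∀ A ∈ K, ∀ a₁ a₂ b₁ b₂ : A.carrier,
      (principalCong L A.carrier b₁ b₂).rel a₁ a₂ ↔
        ∀ B ∈ K, ∀ g : A.carrier ↪[L] B.carrier, ∀ w : Fin m → B.carrier,
          ξ.Realize (Sum.elim (fun i : Fin 4 => g (![a₁, a₂, b₁, b₂] i)) w)

/-- The pair `(γ, φ)` witnesses a guarded deduction theorem for `K`. -/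
def GuardedDTWitness (K : Set (Alg L)) (m : ℕ)
    (γ φ : List (L.Term (Fin 4 ⊕ Fin m) × L.Term (Fin 4 ⊕ Fin m))) : Prop :=
  ∀ (p : ℕ) (s₁ s₂ t₁ t₂ : L.Term (Fin p)) (π : List (L.Term (Fin p) × L.Term (Fin p))),
    ((∀ A ∈ K, ∀ v : Fin p → A.carrier,
        ConjHolds π v → t₁.realize v = t₂.realize v → s₁.realize v = s₂.realize v) ↔
      (∀ A ∈ K, ∀ v : Fin p → A.carrier, ConjHolds π v →
        ∀ w : Fin m → A.carrier,
          ConjHolds γ (Sum.elim ![s₁.realize v, s₂.realize v, t₁.realize v, t₂.realize v] w) →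
          ConjHolds φ (Sum.elim ![s₁.realize v, s₂.realize v, t₁.realize v, t₂.realize v] w))) ∧
    (∀ σ : L.Term (Fin p) × L.Term (Fin p),
      ((∀ A ∈ K, ∀ v : Fin p → A.carrier, ∀ w : Fin m → A.carrier,
          ConjHolds π v →
          ConjHolds γ (Sum.elim ![s₁.realize v, s₂.realize v, t₁.realize v, t₂.realize v] w) →
          EqHolds σ v) ↔
        (∀ A ∈ K, ∀ v : Fin p → A.carrier, ConjHolds π v → EqHolds σ v)))

/-- `K` has a guarded deduction theorem. -/
def GuardedDT (K : Set (Alg L)) : Prop :=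
  ∃ (m : ℕ) (γ φ : List (L.Term (Fin 4 ⊕ Fin m) × L.Term (Fin 4 ⊕ Fin m))),
    GuardedDTWitness K m γ φ

/-- The term algebra. -/
instance termStructure (α : Type) : L.Structure (L.Term α) where
  funMap f x := Term.func f x
  RelMap _ _ := False

/-- The congruence of the term algebra consisting of the identities of the class `K`. -/
def varietyCong (K : Set (Alg L)) (α : Type) : Congruence L (L.Term α) where
  rel s t := ∀ A ∈ K, ∀ v : α → A.carrier, s.realize v = t.realize v
  refl _ _ _ _ := rfl
  symm _ _ h A hA v := (h A hA v).symm
  trans _ _ _ h₁ h₂ A hA v := (h₁ A hA v).trans (h₂ A hA v)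
  compat n f x y h A hA v := by
    show Term.realize v (Term.func f x) = Term.realize v (Term.func f y)
    simp only [Term.realize]
    exact congrArg (funMap f) (funext fun i => h i A hA v)

/-- The setoid underlying a congruence. -/
def Congruence.setoid {M : Type u} [L.Structure M] (θ : Congruence L M) : Setoid M :=
  ⟨θ.rel, ⟨θ.refl, fun h => θ.symm _ _ h, fun h h' => θ.trans _ _ _ h h'⟩⟩

/-- The quotient of an algebra by a congruence. -/
abbrev QuotAlg {M : Type u} [L.Structure M] (θ : Congruence L M) : Type u :=
  Quotient θ.setoid

noncomputable instance quotAlgStructure {M : Type u} [L.Structure M] (θ : Congruence L M) :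
    L.Structure (QuotAlg θ) where
  funMap f x := Quotient.mk θ.setoid (funMap f fun i => (x i).out)
  RelMap _ _ := False

/-- The free algebra of the class `K` over the variables `α`. -/
abbrev FreeAlg (K : Set (Alg L)) (α : Type) : Type u :=
  QuotAlg (varietyCong K α)

/-- `A` is finitely presented relative to the class `K`: it is isomorphic to a quotient of a
finitely generated `K`-free algebra by a compact congruence. -/
def IsFinitelyPresentedIn (K : Set (Alg L)) (A : Type u) [L.Structure A] : Prop :=
  ∃ (n : ℕ) (s : Set (FreeAlg K (Fin n) × FreeAlg K (Fin n))), s.Finite ∧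
    Nonempty (A ≃[L] QuotAlg (congGen L (FreeAlg K (Fin n)) s))

/-- Coherence: every finitely generated subalgebra of a finitely presented member of `K` is
finitely presented. -/
def Coherent (K : Set (Alg L)) : Prop :=
  ∀ A ∈ K, IsFinitelyPresentedIn K A.carrier →
    ∀ S : L.Substructure A.carrier, S.FG → IsFinitelyPresentedIn K ↥S


/-! ### The language of pointed residuated lattices -/

/-- Function symbols of the language of pointed residuated lattices. -/
inductive RLFunc : ℕ → Type u
  | meet : RLFunc 2
  | join : RLFunc 2
  | mul : RLFunc 2
  | ldiv : RLFunc 2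
  | rdiv : RLFunc 2
  | unit : RLFunc 0
  | zero : RLFunc 0

/-- The (algebraic) language of pointed residuated lattices. -/
def RLLang : FirstOrder.Language.{u, u} :=
  ⟨RLFunc.{u}, fun _ => PEmpty⟩

section RLOps

variable {A : Type u} [RLLang.{u}.Structure A]

/-- The meet operation. -/
def rlMeet (a b : A) : A := funMap (L := RLLang) RLFunc.meet ![a, b]

/-- The join operation. -/
def rlJoin (a b : A) : A := funMap (L := RLLang) RLFunc.join ![a, b]

/-- The monoid operation. -/
def rlMul (a b : A) : A := funMap (L := RLLang) RLFunc.mul ![a, b]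

/-- The left residual `a \ b`. -/
def rlLdiv (a b : A) : A := funMap (L := RLLang) RLFunc.ldiv ![a, b]

/-- The right residual `a / b`. -/
def rlRdiv (a b : A) : A := funMap (L := RLLang) RLFunc.rdiv ![a, b]

/-- The monoid unit `e`. -/
def rlE : A := funMap (L := RLLang) RLFunc.unit ![]

/-- The constant `0`. -/
def rlZ : A := funMap (L := RLLang) RLFunc.zero ![]

/-- The lattice order `a ≤ b ⟺ a ∧ b = a`. -/
def rlLe (a b : A) : Prop := rlMeet a b = a

/-- The operation `x ≡ y := (x\y) ∧ (y\x) ∧ e`. -/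
def rlEquiv (a b : A) : A := rlMeet (rlMeet (rlLdiv a b) (rlLdiv b a)) rlE

/-- Powers: `a^0 = e` and `a^(n+1) = a · a^n`. -/
def rlPow (a : A) : ℕ → A
  | 0 => rlE
  | n + 1 => rlMul a (rlPow a n)

end RLOps

/-- `A` is a pointed residuated lattice: `⟨A,∧,∨⟩` is a lattice, `⟨A,·,e⟩` is a monoid, and
`\, /` are the left and right residuals of `·`. -/
structure IsPRL (A : Type u) [RLLang.{u}.Structure A] : Prop where
  meet_comm : ∀ a b : A, rlMeet a b = rlMeet b a
  meet_assoc : ∀ a b c : A, rlMeet (rlMeet a b) c = rlMeet a (rlMeet b c)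
  join_comm : ∀ a b : A, rlJoin a b = rlJoin b a
  join_assoc : ∀ a b c : A, rlJoin (rlJoin a b) c = rlJoin a (rlJoin b c)
  absorb₁ : ∀ a b : A, rlMeet a (rlJoin a b) = a
  absorb₂ : ∀ a b : A, rlJoin a (rlMeet a b) = a
  mul_assoc : ∀ a b c : A, rlMul (rlMul a b) c = rlMul a (rlMul b c)
  one_mul : ∀ a : A, rlMul rlE a = a
  mul_one : ∀ a : A, rlMul a rlE = a
  ldiv_resid : ∀ a b c : A, rlLe b (rlLdiv a c) ↔ rlLe (rlMul a b) c
  rdiv_resid : ∀ a b c : A, rlLe (rlMul a b) c ↔ rlLe a (rlRdiv c b)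

/-- A class of pointed residuated lattices is Hamiltonian if, for some `k ≥ 1`, all of its
members satisfy `(x ∧ e)^k · y ≈ y · (x ∧ e)^k`. -/
def Hamiltonian (K : Set (Alg RLLang.{u})) : Prop :=
  ∃ k : ℕ, 0 < k ∧ ∀ A ∈ K, ∀ x y : A.carrier,
    rlMul (rlPow (rlMeet x rlE) k) y = rlMul y (rlPow (rlMeet x rlE) k)

/-! ### The language with an additional binary operation `▷` -/

/-- Function symbols of the language of pointed residuated lattices with `▷`. -/
inductive RLDFunc : ℕ → Type u
  | meet : RLDFunc 2
  | join : RLDFunc 2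
  | mul : RLDFunc 2
  | ldiv : RLDFunc 2
  | rdiv : RLDFunc 2
  | rhd : RLDFunc 2
  | unit : RLDFunc 0
  | zero : RLDFunc 0

/-- The language of pointed residuated lattices expanded with `▷`. -/
def RLDLang : FirstOrder.Language.{u, u} :=
  ⟨RLDFunc.{u}, fun _ => PEmpty⟩

/-- The inclusion of function symbols. -/
def rlToRLD : ∀ {n : ℕ}, RLFunc.{u} n → RLDFunc.{u} n
  | _, RLFunc.meet => RLDFunc.meet
  | _, RLFunc.join => RLDFunc.join
  | _, RLFunc.mul => RLDFunc.mul
  | _, RLFunc.ldiv => RLDFunc.ldiv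
  | _, RLFunc.rdiv => RLDFunc.rdiv
  | _, RLFunc.unit => RLDFunc.unit
  | _, RLFunc.zero => RLDFunc.zero

/-- The `RLLang`-reduct of an `RLDLang`-structure. -/
def rlReduct (B : Type u) [RLDLang.{u}.Structure B] : RLLang.{u}.Structure B where
  funMap f x := funMap (L := RLDLang) (rlToRLD f) x
  RelMap r _ := PEmpty.elim r

section RLDOps

variable {B : Type u} [RLDLang.{u}.Structure B]

/-- The meet operation of an `RLDLang`-structure. -/
def rldMeet (a b : B) : B := funMap (L := RLDLang) RLDFunc.meet ![a, b]

/-- The operation `▷` of an `RLDLang`-structure. -/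
def rldRhd (a b : B) : B := funMap (L := RLDLang) RLDFunc.rhd ![a, b]

/-- The unit of an `RLDLang`-structure. -/
def rldE : B := funMap (L := RLDLang) RLDFunc.unit ![]

end RLDOps

/-- A linearly ordered `RLLang`-structure. -/
def LinearlyOrderedRL (A : Type u) [RLLang.{u}.Structure A] : Prop :=
  ∀ a b : A, rlMeet a b = a ∨ rlMeet a b = b

/-- The linearly ordered members of a class of `RLLang`-structures. -/
def linMembers (V : Set (Alg RLLang.{u})) : Set (Alg RLLang.{u}) :=
  {A | A ∈ V ∧ LinearlyOrderedRL A.carrier}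

/-- The class `ISP(C)`: isomorphic copies of subalgebras of products of members of `C`. -/
def ISP {L : FirstOrder.Language.{u, u}} (C : Set (Alg L)) : Set (Alg L) :=
  {A | ∃ (ι : Type u) (M : ι → Alg L), (∀ i, M i ∈ C) ∧
      Nonempty (A.carrier ↪[L] ((i : ι) → (M i).carrier))}

/-- The variety generated by a class: the smallest class containing it that is closed under
homomorphic images, subalgebras and products. -/
def varietyGeneratedBy {L : FirstOrder.Language.{u, u}} (C : Set (Alg L)) : Set (Alg L) :=
  ⋂₀ {K : Set (Alg L) | C ⊆ K ∧ IsVariety K}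

/-- The class `V^c_▷`: linearly ordered members of `V` expanded with the binary operation
`x ▷ y := y` if `e ≤ x` and `x ▷ y := e` otherwise. -/
def expansions (V : Set (Alg RLLang.{u})) : Set (Alg RLDLang.{u}) :=
  {B | @Alg.mk RLLang B.carrier (rlReduct B.carrier) ∈ linMembers V ∧
      ∀ a b : B.carrier,
        (rldMeet rldE a = rldE → rldRhd a b = b) ∧
        (rldMeet rldE a ≠ rldE → rldRhd a b = rldE)}

/-- The consequence relation `Γ ⊨_K t`, i.e.
`K ⊨ (⋀_{u ∈ Γ} e ≤ u) → e ≤ t`, where `s ≤ t` denotes `s ∧ t ≈ s`. -/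
def TermCons {n : ℕ} (K : Set (Alg RLDLang.{u}))
    (Γ : List (RLDLang.{u}.Term (Fin n))) (t : RLDLang.{u}.Term (Fin n)) : Prop :=
  ∀ B ∈ K, ∀ v : Fin n → B.carrier,
    (∀ s ∈ Γ, rldMeet rldE (s.realize v) = rldE) →
    rldMeet rldE (t.realize v) = rldE


/-! ### Auxiliary machinery (added) -/

section AuxGeneric

variable {L : FirstOrder.Language.{u, u}}

theorem realize_pi' {ι : Type u} (M : ι → Type u) [∀ i, L.Structure (M i)]
    {α : Type} (t : L.Term α) (v : α → ∀ i, M i) (i : ι) :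
    t.realize v i = t.realize (fun j => v j i) := by
  induction t with
  | var a => rfl
  | func f ts ih =>
      show funMap f (fun k => ((ts k).realize v) i) = funMap f fun k => (ts k).realize fun j => v j i
      exact congrArg (funMap f) (funext fun k => ih k)

theorem subset_varietyGeneratedBy (C : Set (Alg L)) : C ⊆ varietyGeneratedBy C :=
  fun _A hA => Set.mem_sInter.2 fun _K hK => hK.1 hA

theorem eq_transfer (C : Set (Alg L)) {α : Type} (p q : L.Term α)
    (hC : ∀ B ∈ C, ∀ v : α → B.carrier, p.realize v = q.realize v) :
    ∀ B ∈ varietyGeneratedBy C, ∀ v : α → B.carrier, p.realize v = q.realize v := by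
  intro B hB
  have hBK : B ∈ {A : Alg L | ∀ v : α → A.carrier, p.realize v = q.realize v} := by
    refine hB _ ⟨fun A hA => hC A hA, ?_, ?_, ?_⟩
    · intro A hA N _ f hf w
      choose g hg using hf
      have hw : f ∘ (g ∘ w) = w := funext fun a => hg (w a)
      calc p.realize w = p.realize (f ∘ (g ∘ w)) := by rw [hw]
        _ = f (p.realize (g ∘ w)) := HomClass.realize_term f
        _ = f (q.realize (g ∘ w)) := by rw [hA (g ∘ w)]
        _ = q.realize (f ∘ (g ∘ w)) := (HomClass.realize_term f).symm
        _ = q.realize w := by rw [hw]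
    · intro A hA S v
      apply S.subtype.injective
      calc S.subtype (p.realize v) = p.realize (S.subtype ∘ v) :=
            (HomClass.realize_term S.subtype).symm
        _ = q.realize (S.subtype ∘ v) := hA _
        _ = S.subtype (q.realize v) := HomClass.realize_term S.subtype
    · intro ι M _ hM v
      funext i
      rw [realize_pi' M p v i, realize_pi' M q v i]
      exact hM i _
  exact hBK

theorem Congruence.rel_realize {M : Type u} [L.Structure M] (θ : Congruence L M)
    {α : Type} (t : L.Term α) (v w : α → M) (h : ∀ i, θ.rel (v i) (w i)) :
    θ.rel (t.realize v) (t.realize w) := by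
  induction t with
  | var a => exact h a
  | func f ts ih => exact θ.compat _ f _ _ fun i => ih i

end AuxGeneric

section RLDAux

variable {B : Type u} [RLDLang.{u}.Structure B]

/-- Extra operations on an `RLDLang`-structure. -/
def rldJoin (a b : B) : B := funMap (L := RLDLang) RLDFunc.join ![a, b]
def rldMul (a b : B) : B := funMap (L := RLDLang) RLDFunc.mul ![a, b]
def rldLdiv (a b : B) : B := funMap (L := RLDLang) RLDFunc.ldiv ![a, b]
def rldRdiv (a b : B) : B := funMap (L := RLDLang) RLDFunc.rdiv ![a, b]

/-- The guard term `g(a,b) = (a\b) ∧ (b\a) ∧ e`. -/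
def rldG (a b : B) : B := rldMeet (rldMeet (rldLdiv a b) (rldLdiv b a)) rldE

/-- Term builders. -/
def tE {α : Type} : RLDLang.{u}.Term α := Term.func RLDFunc.unit ![]
def tOp {α : Type} (f : RLDFunc.{u} 2) (s t : RLDLang.{u}.Term α) : RLDLang.{u}.Term α :=
  Term.func f ![s, t]

theorem realize_tOp {α : Type} (f : RLDFunc.{u} 2) (s t : RLDLang.{u}.Term α) (v : α → B) :
    (tOp f s t).realize v = funMap (L := RLDLang) f ![s.realize v, t.realize v] := by
  show funMap (L := RLDLang) f _ = _
  congr 1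
  funext i
  fin_cases i <;> rfl

theorem realize_tE {α : Type} (v : α → B) : (tE (α := α)).realize v = (rldE : B) := by
  show funMap (L := RLDLang) RLDFunc.unit _ = _
  congr 1
  funext i
  exact i.elim0

end RLDAux

section ChainFacts

variable {B : Type u} [RLDLang.{u}.Structure B] (hP : @IsPRL B (rlReduct B))
include hP

theorem pm_comm : ∀ a b : B, rldMeet a b = rldMeet b a := @IsPRL.meet_comm B (rlReduct B) hP
theorem pm_assoc : ∀ a b c : B, rldMeet (rldMeet a b) c = rldMeet a (rldMeet b c) :=
  @IsPRL.meet_assoc B (rlReduct B) hP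
theorem pj_absorb1 : ∀ a b : B, rldMeet a (rldJoin a b) = a := @IsPRL.absorb₁ B (rlReduct B) hP
theorem pj_absorb2 : ∀ a b : B, rldJoin a (rldMeet a b) = a := @IsPRL.absorb₂ B (rlReduct B) hP
theorem pm_one_mul : ∀ a : B, rldMul rldE a = a := @IsPRL.one_mul B (rlReduct B) hP
theorem pm_mul_one : ∀ a : B, rldMul a rldE = a := @IsPRL.mul_one B (rlReduct B) hP
theorem p_ldiv_resid : ∀ a b c : B,
    (rldMeet b (rldLdiv a c) = b ↔ rldMeet (rldMul a b) c = rldMul a b) := @IsPRL.ldiv_resid B (rlReduct B) hP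
theorem p_rdiv_resid : ∀ a b c : B,
    (rldMeet (rldMul a b) c = rldMul a b ↔ rldMeet a (rldRdiv c b) = a) := @IsPRL.rdiv_resid B (rlReduct B) hP

theorem pm_idem (a : B) : rldMeet a a = a := by
  have h1 : rldMeet a (rldJoin a (rldMeet a a)) = a := pj_absorb1 hP a (rldMeet a a)
  rw [pj_absorb2 hP a a] at h1
  exact h1

theorem pj_idem (a : B) : rldJoin a a = a := by
  have h := pj_absorb2 hP a a
  rw [pm_idem hP a] at h
  exact h

theorem p_le_trans {a b c : B} (h1 : rldMeet a b = a) (h2 : rldMeet b c = b) :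
    rldMeet a c = a := by
  calc rldMeet a c = rldMeet (rldMeet a b) c := by rw [h1]
    _ = rldMeet a (rldMeet b c) := pm_assoc hP a b c
    _ = rldMeet a b := by rw [h2]
    _ = a := h1

theorem p_antisymm {a b : B} (h1 : rldMeet a b = a) (h2 : rldMeet b a = b) : a = b :=
  h1.symm.trans ((pm_comm hP a b).trans h2)

theorem p_e_le_ldiv_self (a : B) : rldMeet rldE (rldLdiv a a) = rldE := by
  refine (p_ldiv_resid hP a rldE a).2 ?_
  rw [pm_mul_one hP a]
  exact pm_idem hP a

theorem p_ldiv_ee : rldLdiv (rldE : B) rldE = rldE := by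
  have h1 : rldMeet (rldLdiv (rldE : B) rldE) rldE = rldLdiv rldE rldE := by
    have h := (p_ldiv_resid hP rldE (rldLdiv (rldE : B) rldE) rldE).1
      (pm_idem hP (rldLdiv rldE rldE))
    rw [pm_one_mul hP (rldLdiv (rldE : B) rldE)] at h
    exact h
  exact p_antisymm hP h1 (p_e_le_ldiv_self hP rldE)

theorem p_rdiv_ee : rldRdiv (rldE : B) rldE = rldE := by
  have h1 : rldMeet (rldRdiv (rldE : B) rldE) rldE = rldRdiv rldE rldE := by
    have h := (p_rdiv_resid hP (rldRdiv (rldE : B) rldE) rldE rldE).2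
      (pm_idem hP (rldRdiv rldE rldE))
    rw [pm_mul_one hP (rldRdiv (rldE : B) rldE)] at h
    exact h
  have h2 : rldMeet (rldE : B) (rldRdiv rldE rldE) = rldE := by
    have h := (p_rdiv_resid hP (rldE : B) rldE rldE).1
    rw [pm_one_mul hP (rldE : B)] at h
    exact h (pm_idem hP rldE)
  exact p_antisymm hP h1 h2

theorem p_mul_ee : rldMul (rldE : B) rldE = rldE := pm_one_mul hP rldE
theorem p_join_ee : rldJoin (rldE : B) rldE = rldE := pj_idem hP rldE

/-- `(p ∧ q) ∧ e ≤ p`. -/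
theorem p_g_le_left (p q : B) :
    rldMeet (rldMeet (rldMeet p q) rldE) p = rldMeet (rldMeet p q) rldE := by
  calc rldMeet (rldMeet (rldMeet p q) rldE) p
      = rldMeet p (rldMeet (rldMeet p q) rldE) := pm_comm hP _ _
    _ = rldMeet (rldMeet p (rldMeet p q)) rldE := (pm_assoc hP _ _ _).symm
    _ = rldMeet (rldMeet (rldMeet p p) q) rldE := by rw [pm_assoc hP p p q]
    _ = rldMeet (rldMeet p q) rldE := by rw [pm_idem hP p]

/-- `(p ∧ q) ∧ e ≤ q`. -/
theorem p_g_le_right (p q : B) :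
    rldMeet (rldMeet (rldMeet p q) rldE) q = rldMeet (rldMeet p q) rldE := by
  calc rldMeet (rldMeet (rldMeet p q) rldE) q
      = rldMeet q (rldMeet (rldMeet p q) rldE) := pm_comm hP _ _
    _ = rldMeet (rldMeet q (rldMeet p q)) rldE := (pm_assoc hP _ _ _).symm
    _ = rldMeet (rldMeet (rldMeet q p) q) rldE := by rw [pm_assoc hP q p q]
    _ = rldMeet (rldMeet (rldMeet p q) q) rldE := by rw [pm_comm hP q p]
    _ = rldMeet (rldMeet p (rldMeet q q)) rldE := by rw [pm_assoc hP p q q]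
    _ = rldMeet (rldMeet p q) rldE := by rw [pm_idem hP q]

theorem p_e_le_g_eq {a b : B} (h : rldMeet rldE (rldG a b) = rldE) : a = b := by
  have hle1 : rldMeet rldE (rldLdiv a b) = rldE :=
    p_le_trans hP h (p_g_le_left hP (rldLdiv a b) (rldLdiv b a))
  have hle2 : rldMeet rldE (rldLdiv b a) = rldE :=
    p_le_trans hP h (p_g_le_right hP (rldLdiv a b) (rldLdiv b a))
  have hab : rldMeet a b = a := by
    have h' := (p_ldiv_resid hP a rldE b).1 hle1
    rw [pm_mul_one hP a] at h'
    exact h'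
  have hba : rldMeet b a = b := by
    have h' := (p_ldiv_resid hP b rldE a).1 hle2
    rw [pm_mul_one hP b] at h'
    exact h'
  exact p_antisymm hP hab hba

theorem p_g_self (a : B) : rldG a a = rldE := by
  show rldMeet (rldMeet (rldLdiv a a) (rldLdiv a a)) rldE = rldE
  rw [pm_idem hP (rldLdiv a a)]
  calc rldMeet (rldLdiv a a) rldE = rldMeet rldE (rldLdiv a a) := pm_comm hP _ _
    _ = rldE := p_e_le_ldiv_self hP a

end ChainFacts

section Identities

variable {V : Set (Alg RLLang.{u})}

/-- The PRL structure on the reduct of a member of `expansions V`. -/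
theorem expansion_isPRL (hPRL : ∀ A ∈ V, IsPRL A.carrier)
    {B : Alg RLDLang.{u}} (hB : B ∈ expansions V) :
    @IsPRL B.carrier (rlReduct B.carrier) := hPRL _ hB.1.1

/-- In a member of `expansions V`: `(e ∧ x) ▷ y = x ▷ y`. -/
theorem c_I1 (hPRL : ∀ A ∈ V, IsPRL A.carrier)
    {B : Alg RLDLang.{u}} (hB : B ∈ expansions V) (a c : B.carrier) :
    rldRhd (rldMeet rldE a) c = rldRhd a c := by
  have hP := expansion_isPRL hPRL hB
  by_cases h : rldMeet rldE a = rldE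
  · rw [(hB.2 _ c).1 (by rw [h]; exact pm_idem hP rldE), (hB.2 a c).1 h]
  · have h' : rldMeet rldE (rldMeet rldE a) ≠ rldE := by
      rw [← pm_assoc hP rldE rldE a, pm_idem hP rldE]; exact h
    rw [(hB.2 _ c).2 h', (hB.2 a c).2 h]

/-- In a member of `expansions V`: `e ▷ y = y`. -/
theorem c_I2 (hPRL : ∀ A ∈ V, IsPRL A.carrier)
    {B : Alg RLDLang.{u}} (hB : B ∈ expansions V) (c : B.carrier) :
    rldRhd rldE c = c :=
  (hB.2 _ c).1 (pm_idem (expansion_isPRL hPRL hB) rldE)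

/-- In a member of `expansions V`, `▷` distributes over any binary operation `f` with
`f(e,e) = e`. -/
theorem c_dist (f : RLDFunc.{u} 2)
    {B : Alg RLDLang.{u}} (hB : B ∈ expansions V)
    (hee : funMap (L := RLDLang) f ![(rldE : B.carrier), rldE] = rldE) (a b c : B.carrier) :
    rldRhd a (funMap (L := RLDLang) f ![b, c]) =
      funMap (L := RLDLang) f ![rldRhd a b, rldRhd a c] := by
  by_cases h : rldMeet rldE a = rldE
  · rw [(hB.2 a _).1 h, (hB.2 a b).1 h, (hB.2 a c).1 h]
  · rw [(hB.2 a _).2 h, (hB.2 a b).2 h, (hB.2 a c).2 h, hee]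

/-- In a member of `expansions V`: `x ▷ e = e`. -/
theorem c_unit (hPRL : ∀ A ∈ V, IsPRL A.carrier)
    {B : Alg RLDLang.{u}} (hB : B ∈ expansions V) (a : B.carrier) :
    rldRhd a (rldE : B.carrier) = rldE := by
  by_cases h : rldMeet rldE a = rldE
  · exact (hB.2 a _).1 h
  · exact (hB.2 a _).2 h

/-- In a member of `expansions V`: `g(x,y) ▷ x = g(x,y) ▷ y`. -/
theorem c_I5 (hPRL : ∀ A ∈ V, IsPRL A.carrier)
    {B : Alg RLDLang.{u}} (hB : B ∈ expansions V) (a b : B.carrier) :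
    rldRhd (rldG a b) a = rldRhd (rldG a b) b := by
  have hP := expansion_isPRL hPRL hB
  by_cases h : rldMeet rldE (rldG a b) = rldE
  · rw [p_e_le_g_eq hP h]
  · rw [(hB.2 _ a).2 h, (hB.2 _ b).2 h]

/-- In a member of `expansions V`: `g(x,x) = e`. -/
theorem c_gself (hPRL : ∀ A ∈ V, IsPRL A.carrier)
    {B : Alg RLDLang.{u}} (hB : B ∈ expansions V) (a : B.carrier) :
    rldG a a = rldE := p_g_self (expansion_isPRL hPRL hB) a

end Identities

section WIdentities

variable {V : Set (Alg RLLang.{u})}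

/-- Specialized realization lemmas. -/
theorem realize_tRhd {α : Type} {B : Type u} [RLDLang.{u}.Structure B]
    (s t : RLDLang.{u}.Term α) (v : α → B) :
    (tOp RLDFunc.rhd s t).realize v = rldRhd (s.realize v) (t.realize v) :=
  realize_tOp _ _ _ _

theorem realize_tMeet {α : Type} {B : Type u} [RLDLang.{u}.Structure B]
    (s t : RLDLang.{u}.Term α) (v : α → B) :
    (tOp RLDFunc.meet s t).realize v = rldMeet (s.realize v) (t.realize v) :=
  realize_tOp _ _ _ _

theorem realize_tLdiv {α : Type} {B : Type u} [RLDLang.{u}.Structure B]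
    (s t : RLDLang.{u}.Term α) (v : α → B) :
    (tOp RLDFunc.ldiv s t).realize v = rldLdiv (s.realize v) (t.realize v) :=
  realize_tOp _ _ _ _

theorem w_I1 (hPRL : ∀ A ∈ V, IsPRL A.carrier) :
    ∀ B ∈ varietyGeneratedBy (expansions V), ∀ a c : B.carrier,
      rldRhd (rldMeet rldE a) c = rldRhd a c := by
  intro B hBW a c
  have h := eq_transfer (expansions V)
    (tOp RLDFunc.rhd (tOp RLDFunc.meet tE (Term.var 0)) (Term.var 1))
    (tOp RLDFunc.rhd (Term.var 0) (Term.var 1))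
    (fun B hB v => by
      simp only [realize_tOp, realize_tE, Term.realize_var]
      exact c_I1 hPRL hB (v 0) (v 1))
    B hBW ![a, c]
  simp only [realize_tOp, realize_tE, Term.realize_var, Matrix.cons_val_zero,
    Matrix.cons_val_one, Matrix.head_cons] at h
  exact h

theorem w_I2 (hPRL : ∀ A ∈ V, IsPRL A.carrier) :
    ∀ B ∈ varietyGeneratedBy (expansions V), ∀ c : B.carrier, rldRhd rldE c = c := by
  intro B hBW c
  have h := eq_transfer (expansions V)
    (tOp RLDFunc.rhd tE (Term.var 0)) (Term.var 0)
    (fun B hB v => by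
      simp only [realize_tOp, realize_tE, Term.realize_var]
      exact c_I2 hPRL hB (v 0))
    B hBW ![c]
  simp only [realize_tOp, realize_tE, Term.realize_var, Matrix.cons_val_zero] at h
  exact h

theorem w_dist (hPRL : ∀ A ∈ V, IsPRL A.carrier) (f : RLDFunc.{u} 2)
    (hee : ∀ B ∈ expansions V, funMap (L := RLDLang) f ![(rldE : B.carrier), rldE] = rldE) :
    ∀ B ∈ varietyGeneratedBy (expansions V), ∀ a b c : B.carrier,
      rldRhd a (funMap (L := RLDLang) f ![b, c]) =
        funMap (L := RLDLang) f ![rldRhd a b, rldRhd a c] := by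
  intro B hBW a b c
  have h := eq_transfer (expansions V)
    (tOp RLDFunc.rhd (Term.var 0) (tOp f (Term.var 1) (Term.var 2)))
    (tOp f (tOp RLDFunc.rhd (Term.var 0) (Term.var 1))
      (tOp RLDFunc.rhd (Term.var 0) (Term.var 2)))
    (fun B hB v => by
      simp only [realize_tOp, realize_tE, Term.realize_var]
      exact c_dist f hB (hee B hB) (v 0) (v 1) (v 2))
    B hBW ![a, b, c]
  simp only [realize_tOp, realize_tE, Term.realize_var, Matrix.cons_val_zero,
    Matrix.cons_val_one, Matrix.head_cons, Matrix.cons_val_two, Matrix.tail_cons] at h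
  exact h

theorem w_unit (hPRL : ∀ A ∈ V, IsPRL A.carrier) :
    ∀ B ∈ varietyGeneratedBy (expansions V), ∀ a : B.carrier,
      rldRhd a (rldE : B.carrier) = rldE := by
  intro B hBW a
  have h := eq_transfer (expansions V)
    (tOp RLDFunc.rhd (Term.var 0) tE) tE
    (fun B hB v => by
      simp only [realize_tOp, realize_tE, Term.realize_var]
      exact c_unit hPRL hB (v 0))
    B hBW ![a]
  simp only [realize_tOp, realize_tE, Term.realize_var, Matrix.cons_val_zero] at h
  exact h

/-- The guard term over two variables. -/
def tG2 : RLDLang.{u}.Term (Fin 2) :=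
  tOp RLDFunc.meet
    (tOp RLDFunc.meet (tOp RLDFunc.ldiv (Term.var 0) (Term.var 1))
      (tOp RLDFunc.ldiv (Term.var 1) (Term.var 0))) tE

theorem realize_tG2 {B : Type u} [RLDLang.{u}.Structure B] (v : Fin 2 → B) :
    (tG2).realize v = rldG (v 0) (v 1) := by
  simp only [tG2, realize_tOp, realize_tE, Term.realize_var]
  rfl

theorem w_I5 (hPRL : ∀ A ∈ V, IsPRL A.carrier) :
    ∀ B ∈ varietyGeneratedBy (expansions V), ∀ a b : B.carrier,
      rldRhd (rldG a b) a = rldRhd (rldG a b) b := by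
  intro B hBW a b
  have h := eq_transfer (expansions V)
    (tOp RLDFunc.rhd tG2 (Term.var 0)) (tOp RLDFunc.rhd tG2 (Term.var 1))
    (fun B hB v => by
      simp only [realize_tOp, realize_tG2, Term.realize_var]
      exact c_I5 hPRL hB (v 0) (v 1))
    B hBW ![a, b]
  simp only [realize_tOp, realize_tG2, Term.realize_var, Matrix.cons_val_zero,
    Matrix.cons_val_one, Matrix.head_cons] at h
  exact h

theorem w_gself (hPRL : ∀ A ∈ V, IsPRL A.carrier) :
    ∀ B ∈ varietyGeneratedBy (expansions V), ∀ a : B.carrier, rldG a a = rldE := by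
  intro B hBW a
  have h := eq_transfer (expansions V)
    (tOp RLDFunc.meet
      (tOp RLDFunc.meet (tOp RLDFunc.ldiv (Term.var 0) (Term.var 0))
        (tOp RLDFunc.ldiv (Term.var 0) (Term.var 0))) tE) tE
    (fun B hB v => by
      simp only [realize_tOp, realize_tE, Term.realize_var]
      exact c_gself hPRL hB (v 0))
    B hBW ![a]
  simp only [realize_tOp, realize_tE, Term.realize_var, Matrix.cons_val_zero] at h
  exact h

end WIdentities

section Deduction

variable {V : Set (Alg RLLang.{u})}

/-- The nested implication term `γ₁ ▷ (γ₂ ▷ (⋯ ▷ u))`. -/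
def nestTerm {n : ℕ} (Γ : List (RLDLang.{u}.Term (Fin n))) (u : RLDLang.{u}.Term (Fin n)) :
    RLDLang.{u}.Term (Fin n) :=
  Γ.foldr (tOp RLDFunc.rhd) u

/-- If `Γ ⊨_C u` then the equation `e ∧ Nest(Γ, u) ≈ e` holds in every member of `C`. -/
theorem c_nest_valid (hPRL : ∀ A ∈ V, IsPRL A.carrier) {n : ℕ}
    {B : Alg RLDLang.{u}} (hB : B ∈ expansions V) (v : Fin n → B.carrier)
    (u : RLDLang.{u}.Term (Fin n)) :
    ∀ Γ : List (RLDLang.{u}.Term (Fin n)),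
      ((∀ s ∈ Γ, rldMeet rldE (s.realize v) = rldE) → rldMeet rldE (u.realize v) = rldE) →
      rldMeet rldE ((nestTerm Γ u).realize v) = rldE := by
  have hP := expansion_isPRL hPRL hB
  intro Γ
  induction Γ with
  | nil => intro himp; exact himp (fun s hs => absurd hs List.not_mem_nil)
  | cons γ Γ' ih =>
      intro himp
      show rldMeet rldE ((tOp RLDFunc.rhd γ (nestTerm Γ' u)).realize v) = rldE
      rw [realize_tRhd]
      by_cases hγ : rldMeet rldE (γ.realize v) = rldE
      · rw [(hB.2 _ _).1 hγ]
        exact ih fun hrest => himp fun s hs => by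
          rcases List.mem_cons.1 hs with h | h
          · rw [h]; exact hγ
          · exact hrest s h
      · rw [(hB.2 _ _).2 hγ]
        exact pm_idem hP rldE

/-- Peeling the nested term inside the generated variety. -/
theorem w_peel (hPRL : ∀ A ∈ V, IsPRL A.carrier) {n : ℕ}
    {B : Alg RLDLang.{u}} (hBW : B ∈ varietyGeneratedBy (expansions V))
    (v : Fin n → B.carrier) (u : RLDLang.{u}.Term (Fin n)) :
    ∀ Γ : List (RLDLang.{u}.Term (Fin n)),
      (∀ s ∈ Γ, rldMeet rldE (s.realize v) = rldE) →
      rldMeet rldE ((nestTerm Γ u).realize v) = rldE →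
      rldMeet rldE (u.realize v) = rldE := by
  intro Γ
  induction Γ with
  | nil => intro _ h; exact h
  | cons γ Γ' ih =>
      intro hprem hnest
      have hγ : rldMeet rldE (γ.realize v) = rldE := hprem γ List.mem_cons_self
      have hnest' : (nestTerm (γ :: Γ') u).realize v = (nestTerm Γ' u).realize v := by
        show (tOp RLDFunc.rhd γ (nestTerm Γ' u)).realize v = _
        rw [realize_tRhd, ← w_I1 hPRL B hBW (γ.realize v) ((nestTerm Γ' u).realize v), hγ,
          w_I2 hPRL B hBW]
      rw [hnest'] at hnest
      exact ih (fun s hs => hprem s (List.mem_cons_of_mem γ hs)) hnest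

/-- Consequence over the generated variety coincides with consequence over the chains. -/
theorem termCons_iff (hPRL : ∀ A ∈ V, IsPRL A.carrier) {n : ℕ}
    (Γ : List (RLDLang.{u}.Term (Fin n))) (u : RLDLang.{u}.Term (Fin n)) :
    TermCons (varietyGeneratedBy (expansions V)) Γ u ↔ TermCons (expansions V) Γ u := by
  constructor
  · intro h B hB v hp
    exact h B (subset_varietyGeneratedBy _ hB) v hp
  · intro h B hBW v hprem
    have hval := eq_transfer (expansions V) (tOp RLDFunc.meet tE (nestTerm Γ u)) tE
      (fun B hB v => by
        rw [realize_tMeet, realize_tE]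
        exact c_nest_valid hPRL hB v u Γ (h B hB v))
      B hBW v
    rw [realize_tMeet, realize_tE] at hval
    exact w_peel hPRL hBW v u Γ hprem hval

/-- The deduction theorem over the chains. -/
theorem c_deduction (hPRL : ∀ A ∈ V, IsPRL A.carrier) {n : ℕ}
    (Γ : List (RLDLang.{u}.Term (Fin n))) (s t : RLDLang.{u}.Term (Fin n)) :
    TermCons (expansions V) (s :: Γ) t ↔ TermCons (expansions V) Γ (tOp RLDFunc.rhd s t) := by
  constructor
  · intro h B hB v hp
    have hP := expansion_isPRL hPRL hB
    rw [realize_tRhd]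
    by_cases hs : rldMeet rldE (s.realize v) = rldE
    · rw [(hB.2 _ _).1 hs]
      exact h B hB v fun γ hγ => by
        rcases List.mem_cons.1 hγ with hh | hh
        · rw [hh]; exact hs
        · exact hp γ hh
    · rw [(hB.2 _ _).2 hs]
      exact pm_idem hP rldE
  · intro h B hB v hp
    have hs : rldMeet rldE (s.realize v) = rldE := hp s List.mem_cons_self
    have h' := h B hB v fun γ hγ => hp γ (List.mem_cons_of_mem s hγ)
    rw [realize_tRhd, (hB.2 _ _).1 hs] at h'
    exact h'

end Deduction

section EDPCProof

variable {V : Set (Alg RLLang.{u})}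

/-- The guard term over the four EDPC variables (guard on variables 2, 3). -/
def tG4 : RLDLang.{u}.Term (Fin 4) :=
  tOp RLDFunc.meet
    (tOp RLDFunc.meet (tOp RLDFunc.ldiv (Term.var 2) (Term.var 3))
      (tOp RLDFunc.ldiv (Term.var 3) (Term.var 2))) tE

theorem realize_tG4 {B : Type u} [RLDLang.{u}.Structure B] (v : Fin 4 → B) :
    (tG4).realize v = rldG (v 2) (v 3) := by
  simp only [tG4, realize_tOp, realize_tE, Term.realize_var]
  rfl

theorem compat_bin {M : Type u} [RLDLang.{u}.Structure M] (G : M) (f : RLDFunc.{u} 2)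
    (hdist : ∀ b c : M, rldRhd G (funMap (L := RLDLang) f ![b, c]) =
      funMap (L := RLDLang) f ![rldRhd G b, rldRhd G c])
    (x y : Fin 2 → M) (h : ∀ i, rldRhd G (x i) = rldRhd G (y i)) :
    rldRhd G (funMap (L := RLDLang) f x) = rldRhd G (funMap (L := RLDLang) f y) := by
  have hx : x = ![x 0, x 1] := funext fun i => by fin_cases i <;> rfl
  have hy : y = ![y 0, y 1] := funext fun i => by fin_cases i <;> rfl
  calc rldRhd G (funMap (L := RLDLang) f x)
      = rldRhd G (funMap (L := RLDLang) f ![x 0, x 1]) :=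
        congrArg (rldRhd G) (congrArg (funMap (L := RLDLang) f) hx)
    _ = funMap (L := RLDLang) f ![rldRhd G (x 0), rldRhd G (x 1)] := hdist (x 0) (x 1)
    _ = funMap (L := RLDLang) f ![rldRhd G (y 0), rldRhd G (y 1)] := by rw [h 0, h 1]
    _ = rldRhd G (funMap (L := RLDLang) f ![y 0, y 1]) := (hdist (y 0) (y 1)).symm
    _ = rldRhd G (funMap (L := RLDLang) f y) :=
        (congrArg (rldRhd G) (congrArg (funMap (L := RLDLang) f) hy)).symm

theorem edpc_main (hPRL : ∀ A ∈ V, IsPRL A.carrier) :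
    EDPC (varietyGeneratedBy (expansions V)) := by
  refine ⟨[(tOp RLDFunc.rhd tG4 (Term.var 0), tOp RLDFunc.rhd tG4 (Term.var 1))], ?_⟩
  intro A hA a₁ a₂ b₁ b₂
  have hre1 : (tOp RLDFunc.rhd tG4 (Term.var 0)).realize (![a₁, a₂, b₁, b₂] : Fin 4 → A.carrier) =
      rldRhd (rldG b₁ b₂) a₁ := by
    rw [realize_tRhd, realize_tG4]; rfl
  have hre2 : (tOp RLDFunc.rhd tG4 (Term.var 1)).realize (![a₁, a₂, b₁, b₂] : Fin 4 → A.carrier) =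
      rldRhd (rldG b₁ b₂) a₂ := by
    rw [realize_tRhd, realize_tG4]; rfl
  have hre1' : (tOp RLDFunc.rhd tG4 (Term.var 0)).realize (![a₁, a₂, b₁, b₁] : Fin 4 → A.carrier) =
      rldRhd (rldG b₁ b₁) a₁ := by
    rw [realize_tRhd, realize_tG4]; rfl
  have hre2' : (tOp RLDFunc.rhd tG4 (Term.var 1)).realize (![a₁, a₂, b₁, b₁] : Fin 4 → A.carrier) =
      rldRhd (rldG b₁ b₁) a₂ := by
    rw [realize_tRhd, realize_tG4]; rfl
  have hconj : ConjHolds [(tOp RLDFunc.rhd tG4 (Term.var 0), tOp RLDFunc.rhd tG4 (Term.var 1))]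
      (![a₁, a₂, b₁, b₂] : Fin 4 → A.carrier) ↔
      rldRhd (rldG b₁ b₂) a₁ = rldRhd (rldG b₁ b₂) a₂ := by
    constructor
    · intro hc
      have h := hc _ (List.mem_singleton_self _)
      unfold EqHolds at h
      rw [hre1, hre2] at h
      exact h
    · intro he ε hε
      rw [List.mem_singleton] at hε
      subst hε
      show (tOp RLDFunc.rhd tG4 (Term.var 0)).realize _ = (tOp RLDFunc.rhd tG4 (Term.var 1)).realize _
      rw [hre1, hre2]
      exact he
  rw [hconj]
  constructor
  · intro hpc
    let θ : Congruence RLDLang.{u} A.carrier :=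
      { rel := fun x y => rldRhd (rldG b₁ b₂) x = rldRhd (rldG b₁ b₂) y
        refl := fun _ => rfl
        symm := fun _ _ h => h.symm
        trans := fun _ _ _ h1 h2 => h1.trans h2
        compat := by
          intro m f x y hxy
          cases f with
          | unit => rw [show x = y from funext fun i => i.elim0]
          | zero => rw [show x = y from funext fun i => i.elim0]
          | meet =>
              exact compat_bin _ RLDFunc.meet
                (w_dist hPRL RLDFunc.meet
                  (fun B hB => pm_idem (expansion_isPRL hPRL hB) rldE) A hA (rldG b₁ b₂)) x y hxy
          | join =>
              exact compat_bin _ RLDFunc.join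
                (w_dist hPRL RLDFunc.join
                  (fun B hB => p_join_ee (expansion_isPRL hPRL hB)) A hA (rldG b₁ b₂)) x y hxy
          | mul =>
              exact compat_bin _ RLDFunc.mul
                (w_dist hPRL RLDFunc.mul
                  (fun B hB => p_mul_ee (expansion_isPRL hPRL hB)) A hA (rldG b₁ b₂)) x y hxy
          | ldiv =>
              exact compat_bin _ RLDFunc.ldiv
                (w_dist hPRL RLDFunc.ldiv
                  (fun B hB => p_ldiv_ee (expansion_isPRL hPRL hB)) A hA (rldG b₁ b₂)) x y hxy
          | rdiv =>
              exact compat_bin _ RLDFunc.rdiv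
                (w_dist hPRL RLDFunc.rdiv
                  (fun B hB => p_rdiv_ee (expansion_isPRL hPRL hB)) A hA (rldG b₁ b₂)) x y hxy
          | rhd =>
              exact compat_bin _ RLDFunc.rhd
                (w_dist hPRL RLDFunc.rhd
                  (fun B hB => c_I2 hPRL hB rldE) A hA (rldG b₁ b₂)) x y hxy }
    exact hpc θ (by
      intro p hp
      rw [Set.mem_singleton_iff] at hp
      subst hp
      exact w_I5 hPRL A hA b₁ b₂)
  · intro he θ hθ
    have hb : θ.rel b₁ b₂ := hθ (b₁, b₂) rfl
    have hpt : ∀ i, θ.rel ((![a₁, a₂, b₁, b₂] : Fin 4 → A.carrier) i)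
        ((![a₁, a₂, b₁, b₁] : Fin 4 → A.carrier) i) := by
      intro i
      fin_cases i
      · exact θ.refl a₁
      · exact θ.refl a₂
      · exact θ.refl b₁
      · exact θ.symm _ _ hb
    have hgone : rldG b₁ b₁ = (rldE : A.carrier) := w_gself hPRL A hA b₁
    have h1 := Congruence.rel_realize θ (tOp RLDFunc.rhd tG4 (Term.var 0)) _ _ hpt
    rw [hre1, hre1', hgone, w_I2 hPRL A hA] at h1
    have h2 := Congruence.rel_realize θ (tOp RLDFunc.rhd tG4 (Term.var 1)) _ _ hpt
    rw [hre2, hre2', hgone, w_I2 hPRL A hA] at h2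
    have h1s : θ.rel a₁ (rldRhd (rldG b₁ b₂) a₁) := θ.symm _ _ h1
    rw [he] at h1s
    exact θ.trans _ _ _ h1s h2

end EDPCProof

/-- Proposition 7.2 and Corollary 7.3. Let `V` be a semilinear variety of
pointed residuated lattices. Then for any finite tuple of variables `x̄` and any finite set
`Γ ∪ {s, t}` of terms over `x̄` in the language of pointed residuated lattices expanded with `▷`:
`Γ ∪ {s} ⊨_{V▷} t` if, and only if, `Γ ⊨_{V▷} s ▷ t`. Consequently, the variety `V▷` has
equationally definable principal congruences. -/

theorem deduction_theorem_and_edpc_of_semilinear (V : Set (Alg RLLang.{u}))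
    (hV : IsVariety V) (hPRL : ∀ A ∈ V, IsPRL A.carrier)
    (hSL : V = ISP (linMembers V)) :
    (∀ (n : ℕ) (Γ : List (RLDLang.{u}.Term (Fin n))) (s t : RLDLang.{u}.Term (Fin n)),
        TermCons (varietyGeneratedBy (expansions V)) (s :: Γ) t ↔
          TermCons (varietyGeneratedBy (expansions V)) Γ
            (FirstOrder.Language.Term.func RLDFunc.rhd ![s, t])) ∧
      EDPC (varietyGeneratedBy (expansions V)) := by
  constructor
  · intro n Γ s t
    rw [termCons_iff hPRL (s :: Γ) t, termCons_iff hPRL Γ _]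
    exact c_deduction hPRL Γ s t
  · exact edpc_main hPRL

end Paper
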